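/- Let 0 < p < 1, q = 1 − p, and r ≥ 1. For n ≥ 0 define z_n as the probability that in n independent Bernoulli trials with success probability p there is no run of r consecutive successes; equivalently z_n = Σ_{s ∈ {0,1}^n, s has no r consecutive 1's} p^{#{i : s_i = 1}} q^{#{i : s_i = 0}}. Then z_n = 1 for 0 ≤ n < r, z_r = 1 − p^r, and for every n ≥ r, z_{n+1} − z_n + q·p^r·z_{n−r} = 0. -/
import Mathlib


/-- `hasRun r s` means the Boolean sequence `s` of length `n` contains a run of
`r` consecutive `true`s (successes). -/
def hasRun (r : ℕ) {n : ℕ} (s : Fin n → Bool) : Prop :=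
  ∃ i : ℕ, i + r ≤ n ∧ ∀ j < r, ∀ h : i + j < n, s ⟨i + j, h⟩ = true

open Classical in
/-- The probability that `n` independent Bernoulli(p) trials contain no run of
`r` consecutive successes: the sum over all success/failure sequences without a
run of `r` successes of `p^(#successes) * (1-p)^(#failures)`. -/
noncomputable def noRunProb (p : ℝ) (r n : ℕ) : ℝ :=
  ∑ s ∈ Finset.univ.filter (fun s : Fin n → Bool => ¬ hasRun r s),
    p ^ (Finset.univ.filter (fun i : Fin n => s i = true)).card *
      (1 - p) ^ (Finset.univ.filter (fun i : Fin n => s i = false)).card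

open Finset

/-! ### Auxiliary definitions -/

/-- The weight of a Boolean sequence as a product. -/
noncomputable def wgt (p : ℝ) {n : ℕ} (s : Fin n → Bool) : ℝ :=
  ∏ i, (if s i = true then p else 1 - p)

/-- Concatenation of two Boolean sequences. -/
def app (m k : ℕ) (t : Fin m → Bool) (u : Fin k → Bool) : Fin (m + k) → Bool :=
  fun i => if h : (i : ℕ) < m then t ⟨i, h⟩ else u ⟨(i : ℕ) - m, by omega⟩

/-- Left restriction. -/
def restL (m k : ℕ) (s : Fin (m + k) → Bool) : Fin m → Bool :=
  fun i => s ⟨i, by omega⟩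

/-- Right restriction. -/
def restR (m k : ℕ) (s : Fin (m + k) → Bool) : Fin k → Bool :=
  fun i => s ⟨m + i, by omega⟩

lemma restL_app (m k : ℕ) (t : Fin m → Bool) (u : Fin k → Bool) :
    restL m k (app m k t u) = t := by
  funext i
  simp [restL, app, i.isLt]

lemma restR_app (m k : ℕ) (t : Fin m → Bool) (u : Fin k → Bool) :
    restR m k (app m k t u) = u := by
  funext i
  simp [restR, app]

lemma app_restL_restR (m k : ℕ) (s : Fin (m + k) → Bool) :
    app m k (restL m k s) (restR m k s) = s := by
  funext i
  by_cases h : (i : ℕ) < m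
  · simp [app, h, restL]
  · simp only [app, h, dite_false, restR]
    congr 1
    exact Fin.ext (show m + ((i : ℕ) - m) = (i : ℕ) by omega)

/-- The concatenation equivalence. -/
def appEquiv (m k : ℕ) : ((Fin m → Bool) × (Fin k → Bool)) ≃ (Fin (m + k) → Bool) where
  toFun x := app m k x.1 x.2
  invFun s := (restL m k s, restR m k s)
  left_inv x := by simp [restL_app, restR_app]
  right_inv s := app_restL_restR m k s

lemma wgt_app (p : ℝ) (m k : ℕ) (t : Fin m → Bool) (u : Fin k → Bool) :
    wgt p (app m k t u) = wgt p t * wgt p u := by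
  unfold wgt
  rw [Fin.prod_univ_add (f := fun i => if app m k t u i = true then p else 1 - p)]
  congr 1
  · refine Finset.prod_congr rfl fun i _ => ?_
    have : app m k t u (Fin.castAdd k i) = t i := by
      simp [app, Fin.castAdd, i.isLt]
    rw [this]
  · refine Finset.prod_congr rfl fun i _ => ?_
    have : app m k t u (Fin.natAdd m i) = u i := by
      simp only [app, Fin.natAdd]
      rw [dif_neg (by omega)]
      congr 1
      exact Fin.ext (by simp)
    rw [this]

lemma sum_app (m k : ℕ) (f : (Fin (m + k) → Bool) → ℝ) :
    ∑ s : Fin (m + k) → Bool, f s = ∑ t : Fin m → Bool, ∑ u : Fin k → Bool, f (app m k t u) := by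
  rw [← Equiv.sum_comp (appEquiv m k) f, Fintype.sum_prod_type]
  rfl

lemma sum_wgt_one_fin_one (p : ℝ) : ∑ u : Fin 1 → Bool, wgt p u = 1 := by
  rw [← Equiv.sum_comp ((Equiv.funUnique (Fin 1) Bool).symm) (wgt p)]
  simp only [Fintype.sum_bool]
  simp [wgt, Equiv.funUnique, Fin.prod_univ_one]

lemma sum_wgt (p : ℝ) (n : ℕ) : ∑ s : Fin n → Bool, wgt p s = 1 := by
  induction n with
  | zero =>
      have : ∀ s : Fin 0 → Bool, wgt p s = 1 := fun s => by simp [wgt]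
      simp only [this]
      simp
  | succ n ih =>
      rw [sum_app n 1 (wgt p)]
      simp only [wgt_app]
      rw [← Finset.sum_mul_sum]
      rw [ih, sum_wgt_one_fin_one, one_mul]

lemma wgt_eq (p : ℝ) {n : ℕ} (s : Fin n → Bool) :
    p ^ (Finset.univ.filter (fun i : Fin n => s i = true)).card *
      (1 - p) ^ (Finset.univ.filter (fun i : Fin n => s i = false)).card = wgt p s := by
  unfold wgt
  rw [Finset.prod_ite (fun _ => p) (fun _ => 1 - p), Finset.prod_const, Finset.prod_const]
  have h : (Finset.univ.filter fun i : Fin n => ¬ s i = true)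
      = Finset.univ.filter fun i : Fin n => s i = false := by
    ext i; simp
  rw [h]

open Classical in
/-- `noRunProb` with weights written as products. -/
noncomputable def Z (p : ℝ) (r n : ℕ) : ℝ :=
  ∑ s ∈ Finset.univ.filter (fun s : Fin n → Bool => ¬ hasRun r s), wgt p s

open Classical in
lemma noRunProb_eq_Z (p : ℝ) (r n : ℕ) : noRunProb p r n = Z p r n := by
  unfold noRunProb Z
  exact Finset.sum_congr rfl fun s _ => wgt_eq p s

/-! ### Combinatorial lemmas about runs -/

lemma hasRun_of_restL {r m k : ℕ} {s : Fin (m + k) → Bool}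
    (h : hasRun r (restL m k s)) : hasRun r s := by
  obtain ⟨i, hi, H⟩ := h
  exact ⟨i, by omega, fun j hj hlt => H j hj (by omega)⟩

lemma hasRun_restL_of {r m k : ℕ} {s : Fin (m + k) → Bool} (i : ℕ) (hi : i + r ≤ m)
    (H : ∀ (j : ℕ) (_ : j < r) (h : i + j < m + k), s ⟨i + j, h⟩ = true) :
    hasRun r (restL m k s) :=
  ⟨i, hi, fun j hj h => H j hj (by omega)⟩

lemma seq_congr {N : ℕ} (s : Fin N → Bool) {a b : ℕ} (ha : a < N) (hb : b < N)
    (h : a = b) : s ⟨a, ha⟩ = s ⟨b, hb⟩ := by subst h; rfl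

lemma seq_congr' {N : ℕ} (s : Fin N → Bool) (a : Fin N) {b : ℕ} (hb : b < N)
    (h : (a : ℕ) = b) : s a = s ⟨b, hb⟩ := by
  congr 1
  exact Fin.ext h

/-- The special block: one failure followed by `r` successes. -/
def blk (r : ℕ) : Fin (r + 1) → Bool := fun j => decide ((j : ℕ) ≠ 0)

lemma wgt_blk (p : ℝ) (r : ℕ) : wgt p (blk r) = (1 - p) * p ^ r := by
  unfold wgt blk
  rw [Fin.prod_univ_succ]
  simp [Fin.val_succ]

/-- Key characterization: a sequence of length `m + r + 1` has a run but its
length-`m+r` prefix does not, iff it is `app t (blk r)` for `t` with no run. -/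
lemma key_mem {m r : ℕ} (hr : 1 ≤ r) (s : Fin (m + r + 1) → Bool)
    (h1 : ¬ hasRun r (restL (m + r) 1 s)) (h2 : hasRun r s) :
    (¬ hasRun r (restL m (r + 1) s)) ∧ app m (r + 1) (restL m (r + 1) s) (blk r) = s := by
  obtain ⟨i, hi, H⟩ := h2
  -- the run must start at m + 1
  have him : i = m + 1 := by
    by_contra hne
    have hi' : i + r ≤ m + r := by omega
    exact h1 (hasRun_restL_of i hi' H)
  subst him
  -- all of s at positions m+1 .. m+r are true
  have htrue : ∀ (j : ℕ) (_ : j < r), s ⟨m + 1 + j, by omega⟩ = true :=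
    fun j hj => H j hj (by omega)
  -- s at position m is false
  have hfalse : s ⟨m, by omega⟩ = false := by
    cases hsm : s ⟨m, by omega⟩
    · rfl
    · exfalso
      apply h1
      refine hasRun_restL_of m (le_refl _) (fun j hj hlt => ?_)
      rcases Nat.eq_zero_or_pos j with rfl | hjpos
      · exact (seq_congr s hlt (by omega) (by omega)).trans hsm
      · exact (seq_congr s hlt (by omega) (by omega)).trans (htrue (j - 1) (by omega))
  constructor
  · intro hrun
    apply h1
    obtain ⟨i, hi', H'⟩ := hrun
    refine hasRun_restL_of i (by omega) (fun j hj hlt => ?_)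
    exact H' j hj (by omega)
  · funext x
    by_cases hx : (x : ℕ) < m
    · simp [app, hx, restL]
    · simp only [app, hx, dite_false]
      rcases Nat.eq_or_lt_of_le (Nat.not_lt.mp hx) with heq | hlt
      · have hb : blk r ⟨(x : ℕ) - m, by omega⟩ = false := by
          simp [blk, show (x : ℕ) - m = 0 by omega]
        have hsx : s x = false :=
          (seq_congr' s x (by omega) (by omega)).trans hfalse
        rw [hb, hsx]
      · have hb : blk r ⟨(x : ℕ) - m, by omega⟩ = true := by
          simp [blk, show (x : ℕ) - m ≠ 0 by omega]
        have hsx : s x = true :=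
          (seq_congr' s x (show m + 1 + ((x : ℕ) - m - 1) < m + r + 1 by omega)
            (by omega)).trans (htrue ((x : ℕ) - m - 1) (by omega))
        rw [hb, hsx]

lemma key_mem' {m r : ℕ} (hr : 1 ≤ r) (t : Fin m → Bool) (ht : ¬ hasRun r t) :
    ¬ hasRun r (restL (m + r) 1 (app m (r + 1) t (blk r))) ∧
      hasRun r (app m (r + 1) t (blk r)) := by
  set s : Fin (m + r + 1) → Bool := app m (r + 1) t (blk r) with hs
  have sval_left : ∀ (v : ℕ) (h : v < m), s ⟨v, by omega⟩ = t ⟨v, h⟩ := by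
    intro v h; simp [hs, app, h]
  have sval_m : s ⟨m, by omega⟩ = false := by
    simp [hs, app, blk]
  have sval_right : ∀ (j : ℕ) (_ : j < r), s ⟨m + 1 + j, by omega⟩ = true := by
    intro j hj
    have hnm : ¬ (m + 1 + j < m) := by omega
    simp only [hs, app, hnm, dite_false]
    have : m + 1 + j - m = j + 1 := by omega
    simp [blk, this]
  constructor
  · intro hrun
    obtain ⟨i, hi, H⟩ := hrun
    by_cases hle : i + r ≤ m
    · apply ht
      refine ⟨i, hle, fun j hj h => ?_⟩
      have hlt : i + j < m + r := by omega
      have := H j hj hlt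
      have : s ⟨i + j, by omega⟩ = true := this
      rw [sval_left (i + j) h] at this
      exact this
    · -- position m is inside the run
      have hj : m - i < r := by omega
      have hile : i ≤ m := by omega
      have hT : s ⟨i + (m - i), by omega⟩ = true := H (m - i) hj (by omega)
      have h2 : s ⟨m, by omega⟩ = true :=
        (seq_congr s (by omega) (by omega) (by omega)).trans hT
      rw [sval_m] at h2
      exact Bool.false_ne_true h2
  · refine ⟨m + 1, by omega, fun j hj h => ?_⟩
    exact sval_right j hj

/-! ### Sum computations -/

open Classical in
lemma sum_prefix (p : ℝ) (r N : ℕ) :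
    ∑ s ∈ Finset.univ.filter (fun s : Fin (N + 1) → Bool => ¬ hasRun r (restL N 1 s)),
      wgt p s = Z p r N := by
  unfold Z
  rw [Finset.sum_filter, Finset.sum_filter]
  rw [sum_app N 1 (fun s => if ¬ hasRun r (restL N 1 s) then wgt p s else 0)]
  refine Finset.sum_congr rfl fun t _ => ?_
  simp only [restL_app, wgt_app]
  by_cases hc : ¬ hasRun r t
  · simp only [hc, not_false_eq_true, if_true]
    rw [← Finset.mul_sum, sum_wgt_one_fin_one, mul_one]
  · simp [hc]

open Classical in
lemma step_split (p : ℝ) (r N : ℕ) :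
    Z p r N = Z p r (N + 1) +
      ∑ s ∈ Finset.univ.filter
        (fun s : Fin (N + 1) → Bool => ¬ hasRun r (restL N 1 s) ∧ hasRun r s), wgt p s := by
  rw [← sum_prefix p r N]
  rw [← Finset.sum_filter_add_sum_filter_not
    (Finset.univ.filter (fun s : Fin (N + 1) → Bool => ¬ hasRun r (restL N 1 s)))
    (fun s => hasRun r s) (wgt p)]
  rw [add_comm]
  congr 1
  · -- the ¬hasRun part equals Z (N+1)
    unfold Z
    rw [Finset.filter_filter]
    refine Finset.sum_congr (Finset.filter_congr fun s _ => ?_) fun _ _ => rfl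
    constructor
    · exact fun h => h.2
    · exact fun h => ⟨fun hrl => h (hasRun_of_restL hrl), h⟩
  · rw [Finset.filter_filter]

open Classical in
lemma step_block (p : ℝ) (r m : ℕ) (hr : 1 ≤ r) :
    ∑ s ∈ Finset.univ.filter
        (fun s : Fin (m + r + 1) → Bool => ¬ hasRun r (restL (m + r) 1 s) ∧ hasRun r s),
      wgt p s = (1 - p) * p ^ r * Z p r m := by
  unfold Z
  rw [Finset.mul_sum]
  refine Finset.sum_nbij' (fun s => restL m (r + 1) s)
    (fun t => app m (r + 1) t (blk r)) ?_ ?_ ?_ ?_ ?_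
  · intro s hs
    rw [Finset.mem_filter] at hs ⊢
    exact ⟨Finset.mem_univ _, (key_mem hr s hs.2.1 hs.2.2).1⟩
  · intro t ht
    rw [Finset.mem_filter] at ht ⊢
    exact ⟨Finset.mem_univ _, key_mem' hr t ht.2⟩
  · intro s hs
    rw [Finset.mem_filter] at hs
    exact (key_mem hr s hs.2.1 hs.2.2).2
  · intro t _
    exact restL_app m (r + 1) t (blk r)
  · intro s hs
    rw [Finset.mem_filter] at hs
    conv_lhs => rw [← (key_mem hr s hs.2.1 hs.2.2).2]
    rw [wgt_app, wgt_blk]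
    ring

/-! ### Initial conditions -/

open Classical in
lemma Z_initial (p : ℝ) (r n : ℕ) (hn : n < r) : Z p r n = 1 := by
  unfold Z
  have : Finset.univ.filter (fun s : Fin n → Bool => ¬ hasRun r s) = Finset.univ := by
    refine Finset.filter_true_of_mem fun s _ => ?_
    rintro ⟨i, hi, -⟩
    omega
  rw [this]
  exact sum_wgt p n

open Classical in
lemma Z_at_r (p : ℝ) (r : ℕ) (hr : 1 ≤ r) : Z p r r = 1 - p ^ r := by
  unfold Z
  have hsplit := Finset.sum_filter_add_sum_filter_not
    (Finset.univ : Finset (Fin r → Bool)) (fun s => hasRun r s) (wgt p)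
  have htot : ∑ s : Fin r → Bool, wgt p s = 1 := sum_wgt p r
  have hrun : Finset.univ.filter (fun s : Fin r → Bool => hasRun r s) = {fun _ => true} := by
    ext s
    simp only [Finset.mem_filter, Finset.mem_univ, true_and, Finset.mem_singleton]
    constructor
    · rintro ⟨i, hi, H⟩
      have hi0 : i = 0 := by omega
      subst hi0
      funext x
      exact (seq_congr' s x (show 0 + (x : ℕ) < r by omega) (by omega)).trans
        (H x x.isLt (by omega))
    · rintro rfl
      exact ⟨0, by omega, fun j hj h => rfl⟩
  have hwconst : wgt p (fun _ : Fin r => true) = p ^ r := by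
    simp [wgt]
  rw [hrun, Finset.sum_singleton, hwconst, htot] at hsplit
  linarith

theorem noRunProb_initial_and_recurrence (p : ℝ) (hp : 0 < p) (hp1 : p < 1)
    (q : ℝ) (hq : q = 1 - p) (r : ℕ) (hr : 1 ≤ r) :
    (∀ n < r, noRunProb p r n = 1) ∧
      noRunProb p r r = 1 - p ^ r ∧
      (∀ n ≥ r, noRunProb p r (n + 1) - noRunProb p r n + q * p ^ r * noRunProb p r (n - r) = 0) := by
  refine ⟨fun n hn => ?_, ?_, fun n hn => ?_⟩
  · rw [noRunProb_eq_Z]; exact Z_initial p r n hn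
  · rw [noRunProb_eq_Z]; exact Z_at_r p r hr
  · obtain ⟨m, rfl⟩ : ∃ m, n = m + r := ⟨n - r, by omega⟩
    have hmr : m + r - r = m := by omega
    rw [noRunProb_eq_Z, noRunProb_eq_Z, noRunProb_eq_Z, hmr, hq]
    have h1 := step_split p r (m + r)
    have h2 := step_block p r m hr
    rw [h2] at h1
    linarith
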